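/- With the block algebra A_X = [[D₂, X],[0, D₁]] ⊆ B(H₂ ⊕ H₁) built from a Δ-extension of an operator space X (i.e., X = closure(span(D₂ X)) = closure(span(X D₁)) for C*-algebras D₁, D₂), the pair (A_X, Δ(A_X)) is a Δ-pair: A_X = closure(span(A_X Δ(A_X))) = closure(span(Δ(A_X) A_X)). -/

import Mathlib

/-! The block diagonal `[[D₂, 0], [0, D₁]]` lies in `Δ(A_X)`. Approximate units of the
C*-algebras `D₂` and `D₁` exhibit each diagonal corner `d` as a limit of products `d e`
(resp. `e d`) with `e` in the same corner, while the corner `X` lies in the closed span of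
`X D₁` (resp. `D₂ X`), i.e. of products of the `X`-corner with the `D₁`-corner (resp. of the
`D₂`-corner with the `X`-corner). Conversely, `X` is a `D₂`–`D₁` bimodule, so `A_X` is a
norm-closed algebra containing `Δ(A_X)` and therefore contains both closed spans. -/

open ContinuousLinearMap

noncomputable section

/-- Norm closure of the linear span of a set of operators. -/
def csp {E : Type*} [NormedAddCommGroup E] [NormedSpace ℂ E] (S : Set E) : Set E :=
  closure (Submodule.span ℂ S : Set E)

/-- The block upper-triangular operator `[[d₂, x],[0, d₁]]` on `H₂ ⊕ H₁`. -/
def blockOp {H₁ H₂ : Type*}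
    [NormedAddCommGroup H₁] [InnerProductSpace ℂ H₁] [CompleteSpace H₁]
    [NormedAddCommGroup H₂] [InnerProductSpace ℂ H₂] [CompleteSpace H₂]
    (d₂ : H₂ →L[ℂ] H₂) (x : H₁ →L[ℂ] H₂) (d₁ : H₁ →L[ℂ] H₁) :
    WithLp 2 (H₂ × H₁) →L[ℂ] WithLp 2 (H₂ × H₁) :=
  ((WithLp.prodContinuousLinearEquiv 2 ℂ H₂ H₁).symm : H₂ × H₁ →L[ℂ] WithLp 2 (H₂ × H₁)) ∘L
    ((d₂.comp (fst ℂ H₂ H₁) + x.comp (snd ℂ H₂ H₁)).prod (d₁.comp (snd ℂ H₂ H₁))) ∘L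
    ((WithLp.prodContinuousLinearEquiv 2 ℂ H₂ H₁) : WithLp 2 (H₂ × H₁) →L[ℂ] H₂ × H₁)

open Filter Topology

section ClosedSpan

variable {E F : Type*} [NormedAddCommGroup E] [NormedSpace ℂ E]
  [NormedAddCommGroup F] [NormedSpace ℂ F]

lemma subset_csp (S : Set E) : S ⊆ csp S :=
  fun _ hs => subset_closure (Submodule.subset_span hs)

lemma closure_subset_csp (S : Set E) : closure S ⊆ csp S :=
  closure_mono Submodule.subset_span

lemma csp_subset {S : Set E} {M : Submodule ℂ E} (hM : IsClosed (M : Set E)) (h : S ⊆ M) :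
    csp S ⊆ M :=
  closure_minimal (Submodule.span_le.2 h) hM

lemma add_mem_csp {S : Set E} {x y : E} (hx : x ∈ csp S) (hy : y ∈ csp S) : x + y ∈ csp S :=
  ((Submodule.span ℂ S).topologicalClosure).add_mem hx hy

lemma map_mem_csp (f : E →L[ℂ] F) {S : Set E} {T : Set F} (h : ∀ s ∈ S, f s ∈ csp T)
    {x : E} (hx : x ∈ csp S) : f x ∈ csp T :=
  csp_subset (M := ((Submodule.span ℂ T).topologicalClosure).comap (f : E →ₗ[ℂ] F))
    ((Submodule.isClosed_topologicalClosure _).preimage f.continuous) h hx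

lemma map_mem_of_coe_eq_csp {M : Submodule ℂ E} {S : Set E} (hM : (M : Set E) = csp S)
    (f : E →L[ℂ] E) (hf : Set.MapsTo f S S) {x : E} (hx : x ∈ M) : f x ∈ M := by
  rw [← SetLike.mem_coe, hM] at hx ⊢
  exact map_mem_csp f (fun s hs => subset_csp S (hf hs)) hx

end ClosedSpan

namespace NonUnitalStarSubalgebra

variable {A : Type*} [NonUnitalCStarAlgebra A] (D : NonUnitalStarSubalgebra ℂ A)
  [IsClosed (D : Set A)]

theorem exists_approximateUnit :
    ∃ l : Filter A, l.NeBot ∧ (∀ᶠ e in l, e ∈ D) ∧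
      ∀ d ∈ D, Tendsto (d * ·) l (𝓝 d) ∧ Tendsto (· * d) l (𝓝 d) := by
  let _ := CStarAlgebra.spectralOrder D
  have _ := CStarAlgebra.spectralOrderedRing D
  have hl := CStarAlgebra.increasingApproximateUnit D
  refine ⟨(CStarAlgebra.approximateUnit D).map (↑), inferInstance,
    eventually_map.2 (.of_forall fun e => e.2), fun d hd => ⟨?_, ?_⟩⟩
  · exact tendsto_map'_iff.2 <|
      (continuous_subtype_val.tendsto _).comp (hl.tendsto_mul_left ⟨d, hd⟩)
  · exact tendsto_map'_iff.2 <|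
      (continuous_subtype_val.tendsto _).comp (hl.tendsto_mul_right ⟨d, hd⟩)

theorem mem_closure_image_mul_left {d : A} (hd : d ∈ D) : d ∈ closure ((d * ·) '' D) := by
  obtain ⟨l, _, hlD, hl⟩ := D.exists_approximateUnit
  exact mem_closure_of_tendsto (hl d hd).1 (hlD.mono fun e he => ⟨e, he, rfl⟩)

theorem mem_closure_image_mul_right {d : A} (hd : d ∈ D) : d ∈ closure ((· * d) '' D) := by
  obtain ⟨l, _, hlD, hl⟩ := D.exists_approximateUnit
  exact mem_closure_of_tendsto (hl d hd).2 (hlD.mono fun e he => ⟨e, he, rfl⟩)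

end NonUnitalStarSubalgebra

section Sandwich

variable {E F G K : Type*} [NormedAddCommGroup E] [NormedSpace ℂ E]
    [NormedAddCommGroup F] [NormedSpace ℂ F] [NormedAddCommGroup G] [NormedSpace ℂ G]
    [NormedAddCommGroup K] [NormedSpace ℂ K]

def sandwichL (a : G →L[ℂ] K) (b : E →L[ℂ] F) : (F →L[ℂ] G) →L[ℂ] E →L[ℂ] K :=
  (postcomp E a).comp (precomp G b)

@[simp] lemma sandwichL_apply (a : G →L[ℂ] K) (b : E →L[ℂ] F) (T : F →L[ℂ] G) :
    sandwichL a b T = a ∘L T ∘L b := rfl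

end Sandwich

section BlockOp

variable (H₁ H₂ : Type*) [NormedAddCommGroup H₁] [InnerProductSpace ℂ H₁]
    [NormedAddCommGroup H₂] [InnerProductSpace ℂ H₂]

def blockInl : H₂ →L[ℂ] WithLp 2 (H₂ × H₁) :=
  (WithLp.prodContinuousLinearEquiv 2 ℂ H₂ H₁).symm.toContinuousLinearMap ∘L inl ℂ H₂ H₁

def blockInr : H₁ →L[ℂ] WithLp 2 (H₂ × H₁) :=
  (WithLp.prodContinuousLinearEquiv 2 ℂ H₂ H₁).symm.toContinuousLinearMap ∘L inr ℂ H₂ H₁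

variable {H₁ H₂}

@[simp] lemma blockInl_apply (v : H₂) : blockInl H₁ H₂ v = WithLp.toLp 2 (v, 0) := rfl

@[simp] lemma blockInr_apply (v : H₁) : blockInr H₁ H₂ v = WithLp.toLp 2 (0, v) := rfl

variable [CompleteSpace H₁] [CompleteSpace H₂]

variable (H₁ H₂) in
def blockOpL : ((H₂ →L[ℂ] H₂) × (H₁ →L[ℂ] H₂) × (H₁ →L[ℂ] H₁)) →L[ℂ]
    (WithLp 2 (H₂ × H₁) →L[ℂ] WithLp 2 (H₂ × H₁)) :=
  sandwichL (blockInl H₁ H₂) (WithLp.fstL 2 ℂ H₂ H₁) ∘L fst ℂ _ _ +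
  sandwichL (blockInl H₁ H₂) (WithLp.sndL 2 ℂ H₂ H₁) ∘L (fst ℂ _ _ ∘L snd ℂ _ _) +
  sandwichL (blockInr H₁ H₂) (WithLp.sndL 2 ℂ H₂ H₁) ∘L (snd ℂ _ _ ∘L snd ℂ _ _)

@[simp] lemma blockOpL_apply (t : (H₂ →L[ℂ] H₂) × (H₁ →L[ℂ] H₂) × (H₁ →L[ℂ] H₁)) :
    blockOpL H₁ H₂ t = blockOp t.1 t.2.1 t.2.2 := by
  ext v
  simp [blockOpL, blockOp, ← WithLp.toLp_add]

variable (H₁ H₂) in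
def blockEntriesL : (WithLp 2 (H₂ × H₁) →L[ℂ] WithLp 2 (H₂ × H₁)) →L[ℂ]
    ((H₂ →L[ℂ] H₂) × (H₁ →L[ℂ] H₂) × (H₁ →L[ℂ] H₁)) :=
  (sandwichL (WithLp.fstL 2 ℂ H₂ H₁) (blockInl H₁ H₂)).prod
    ((sandwichL (WithLp.fstL 2 ℂ H₂ H₁) (blockInr H₁ H₂)).prod
      (sandwichL (WithLp.sndL 2 ℂ H₂ H₁) (blockInr H₁ H₂)))

lemma leftInverse_blockEntriesL_blockOpL :
    Function.LeftInverse (blockEntriesL H₁ H₂) (blockOpL H₁ H₂) := by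
  rintro ⟨d, x, e⟩
  ext v
  all_goals simp [blockEntriesL, blockOp]

lemma isClosedEmbedding_blockOpL : IsClosedEmbedding (blockOpL H₁ H₂) :=
  leftInverse_blockEntriesL_blockOpL.isClosedEmbedding (blockEntriesL H₁ H₂).continuous
    (blockOpL H₁ H₂).continuous

lemma blockOp_comp_blockOp (d d' : H₂ →L[ℂ] H₂) (x x' : H₁ →L[ℂ] H₂) (e e' : H₁ →L[ℂ] H₁) :
    blockOp d x e ∘L blockOp d' x' e' = blockOp (d ∘L d') (d ∘L x' + x ∘L e') (e ∘L e') := by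
  ext v
  simp [blockOp, add_assoc]

lemma adjoint_blockOp_zero (d : H₂ →L[ℂ] H₂) (e : H₁ →L[ℂ] H₁) :
    adjoint (blockOp d 0 e) = blockOp (adjoint d) 0 (adjoint e) := by
  refine ((eq_adjoint_iff _ _).2 fun v w => ?_).symm
  simp [blockOp, WithLp.prod_inner_apply, adjoint_inner_left]

lemma blockOp_eq_add (d : H₂ →L[ℂ] H₂) (x : H₁ →L[ℂ] H₂) (e : H₁ →L[ℂ] H₁) :
    blockOp d x e = blockOp d 0 0 + blockOp 0 x 0 + blockOp 0 0 e := by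
  ext v
  simp [blockOp, ← WithLp.toLp_add]

end BlockOp

section BlockAlgebra

variable {H₁ H₂ : Type*} [NormedAddCommGroup H₁] [InnerProductSpace ℂ H₁] [CompleteSpace H₁]
    [NormedAddCommGroup H₂] [InnerProductSpace ℂ H₂] [CompleteSpace H₂]
    (D₂ : Submodule ℂ (H₂ →L[ℂ] H₂)) (X : Submodule ℂ (H₁ →L[ℂ] H₂))
    (D₁ : Submodule ℂ (H₁ →L[ℂ] H₁))

local notation "𝔹" => WithLp 2 (H₂ × H₁) →L[ℂ] WithLp 2 (H₂ × H₁)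

def blockAlgebra : Submodule ℂ 𝔹 :=
  (D₂.prod (X.prod D₁)).map (blockOpL H₁ H₂).toLinearMap

variable {D₂ X D₁} in
lemma mem_blockAlgebra {T : 𝔹} :
    T ∈ blockAlgebra D₂ X D₁ ↔ ∃ d₂ ∈ D₂, ∃ x ∈ X, ∃ d₁ ∈ D₁, T = blockOp d₂ x d₁ := by
  simp [blockAlgebra, eq_comm, and_assoc]

lemma coe_blockAlgebra :
    (blockAlgebra D₂ X D₁ : Set 𝔹) = {T | ∃ d₂ ∈ D₂, ∃ x ∈ X, ∃ d₁ ∈ D₁, T = blockOp d₂ x d₁} :=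
  Set.ext fun _ => mem_blockAlgebra

variable {D₂ X D₁}

lemma blockOp_mem_blockAlgebra {d₂ : H₂ →L[ℂ] H₂} {x : H₁ →L[ℂ] H₂} {d₁ : H₁ →L[ℂ] H₁}
    (hd₂ : d₂ ∈ D₂) (hx : x ∈ X) (hd₁ : d₁ ∈ D₁) : blockOp d₂ x d₁ ∈ blockAlgebra D₂ X D₁ :=
  mem_blockAlgebra.2 ⟨d₂, hd₂, x, hx, d₁, hd₁, rfl⟩

lemma isClosed_blockAlgebra (hD₂ : IsClosed (D₂ : Set (H₂ →L[ℂ] H₂)))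
    (hX : IsClosed (X : Set (H₁ →L[ℂ] H₂))) (hD₁ : IsClosed (D₁ : Set (H₁ →L[ℂ] H₁))) :
    IsClosed (blockAlgebra D₂ X D₁ : Set 𝔹) := by
  rw [blockAlgebra, Submodule.map_coe, Submodule.prod_coe, Submodule.prod_coe]
  exact isClosedEmbedding_blockOpL.isClosedMap _ (hD₂.prod (hX.prod hD₁))

lemma comp_mem_blockAlgebra (hD₂ : ∀ a ∈ D₂, ∀ b ∈ D₂, a ∘L b ∈ D₂)
    (hD₁ : ∀ a ∈ D₁, ∀ b ∈ D₁, a ∘L b ∈ D₁) (hD₂X : ∀ d ∈ D₂, ∀ x ∈ X, d ∘L x ∈ X)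
    (hXD₁ : ∀ x ∈ X, ∀ d ∈ D₁, x ∘L d ∈ X) :
    ∀ S ∈ blockAlgebra D₂ X D₁, ∀ T ∈ blockAlgebra D₂ X D₁, S ∘L T ∈ blockAlgebra D₂ X D₁ := by
  intro S hS T hT
  obtain ⟨d₂, hd₂, x, hx, d₁, hd₁, rfl⟩ := mem_blockAlgebra.1 hS
  obtain ⟨d₂', hd₂', x', hx', d₁', hd₁', rfl⟩ := mem_blockAlgebra.1 hT
  rw [blockOp_comp_blockOp]
  exact blockOp_mem_blockAlgebra (hD₂ _ hd₂ _ hd₂')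
    (X.add_mem (hD₂X _ hd₂ _ hx') (hXD₁ _ hx _ hd₁')) (hD₁ _ hd₁ _ hd₁')

lemma blockOp_zero_mem_blockAlgebra_inter_adjoint (hD₂ : ∀ a ∈ D₂, adjoint a ∈ D₂)
    (hD₁ : ∀ a ∈ D₁, adjoint a ∈ D₁) :
    ∀ d₂ ∈ D₂, ∀ d₁ ∈ D₁, blockOp d₂ 0 d₁ ∈
      (blockAlgebra D₂ X D₁ : Set 𝔹) ∩ {T | ∃ S ∈ blockAlgebra D₂ X D₁, T = adjoint S} := by
  intro d₂ hd₂ d₁ hd₁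
  refine ⟨blockOp_mem_blockAlgebra hd₂ X.zero_mem hd₁, _,
    blockOp_mem_blockAlgebra (hD₂ _ hd₂) X.zero_mem (hD₁ _ hd₁), ?_⟩
  rw [adjoint_blockOp_zero, adjoint_adjoint, adjoint_adjoint]

theorem blockAlgebra_subset_csp_comp_diagonal
    (hD₂ : ∀ d ∈ D₂, d ∈ closure ((d ∘L ·) '' D₂)) (hD₁ : ∀ d ∈ D₁, d ∈ closure ((d ∘L ·) '' D₁))
    (hX : (X : Set (H₁ →L[ℂ] H₂)) ⊆ csp {T | ∃ x ∈ X, ∃ d ∈ D₁, T = x ∘L d})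
    {C : Set 𝔹} (hC : ∀ d₂ ∈ D₂, ∀ d₁ ∈ D₁, blockOp d₂ 0 d₁ ∈ C) :
    (blockAlgebra D₂ X D₁ : Set 𝔹) ⊆ csp {T | ∃ a ∈ blockAlgebra D₂ X D₁, ∃ c ∈ C, T = a ∘L c} := by
  intro T hT
  obtain ⟨d₂, hd₂, x, hx, d₁, hd₁, rfl⟩ := mem_blockAlgebra.1 hT
  rw [blockOp_eq_add]
  refine add_mem_csp (add_mem_csp ?_ ?_) ?_
  · simpa using map_mem_csp (blockOpL H₁ H₂ ∘L inl ℂ _ _) (by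
      rintro _ ⟨e, he, rfl⟩
      refine subset_csp _ ⟨_, blockOp_mem_blockAlgebra hd₂ X.zero_mem D₁.zero_mem, _,
        hC e he 0 D₁.zero_mem, ?_⟩
      simp [blockOp_comp_blockOp]) (closure_subset_csp _ (hD₂ d₂ hd₂))
  · simpa using map_mem_csp (blockOpL H₁ H₂ ∘L inr ℂ _ _ ∘L inl ℂ _ _) (by
      rintro _ ⟨y, hy, e, he, rfl⟩
      refine subset_csp _ ⟨_, blockOp_mem_blockAlgebra D₂.zero_mem hy D₁.zero_mem, _,
        hC 0 D₂.zero_mem e he, ?_⟩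
      simp [blockOp_comp_blockOp]) (hX hx)
  · simpa using map_mem_csp (blockOpL H₁ H₂ ∘L inr ℂ _ _ ∘L inr ℂ _ _) (by
      rintro _ ⟨e, he, rfl⟩
      refine subset_csp _ ⟨_, blockOp_mem_blockAlgebra D₂.zero_mem X.zero_mem hd₁, _,
        hC 0 D₂.zero_mem e he, ?_⟩
      simp [blockOp_comp_blockOp]) (closure_subset_csp _ (hD₁ d₁ hd₁))

theorem blockAlgebra_subset_csp_diagonal_comp
    (hD₂ : ∀ d ∈ D₂, d ∈ closure ((· ∘L d) '' D₂)) (hD₁ : ∀ d ∈ D₁, d ∈ closure ((· ∘L d) '' D₁))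
    (hX : (X : Set (H₁ →L[ℂ] H₂)) ⊆ csp {T | ∃ d ∈ D₂, ∃ x ∈ X, T = d ∘L x})
    {C : Set 𝔹} (hC : ∀ d₂ ∈ D₂, ∀ d₁ ∈ D₁, blockOp d₂ 0 d₁ ∈ C) :
    (blockAlgebra D₂ X D₁ : Set 𝔹) ⊆ csp {T | ∃ c ∈ C, ∃ a ∈ blockAlgebra D₂ X D₁, T = c ∘L a} := by
  intro T hT
  obtain ⟨d₂, hd₂, x, hx, d₁, hd₁, rfl⟩ := mem_blockAlgebra.1 hT
  rw [blockOp_eq_add]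
  refine add_mem_csp (add_mem_csp ?_ ?_) ?_
  · simpa using map_mem_csp (blockOpL H₁ H₂ ∘L inl ℂ _ _) (by
      rintro _ ⟨e, he, rfl⟩
      refine subset_csp _ ⟨_, hC e he 0 D₁.zero_mem, _,
        blockOp_mem_blockAlgebra hd₂ X.zero_mem D₁.zero_mem, ?_⟩
      simp [blockOp_comp_blockOp]) (closure_subset_csp _ (hD₂ d₂ hd₂))
  · simpa using map_mem_csp (blockOpL H₁ H₂ ∘L inr ℂ _ _ ∘L inl ℂ _ _) (by
      rintro _ ⟨e, he, y, hy, rfl⟩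
      refine subset_csp _ ⟨_, hC e he 0 D₁.zero_mem, _,
        blockOp_mem_blockAlgebra D₂.zero_mem hy D₁.zero_mem, ?_⟩
      simp [blockOp_comp_blockOp]) (hX hx)
  · simpa using map_mem_csp (blockOpL H₁ H₂ ∘L inr ℂ _ _ ∘L inr ℂ _ _) (by
      rintro _ ⟨e, he, rfl⟩
      refine subset_csp _ ⟨_, hC 0 D₂.zero_mem e he, _,
        blockOp_mem_blockAlgebra D₂.zero_mem X.zero_mem hd₁, ?_⟩
      simp [blockOp_comp_blockOp]) (closure_subset_csp _ (hD₁ d₁ hd₁))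

end BlockAlgebra

theorem stmt12 {H₁ H₂ : Type*}
    [NormedAddCommGroup H₁] [InnerProductSpace ℂ H₁] [CompleteSpace H₁]
    [NormedAddCommGroup H₂] [InnerProductSpace ℂ H₂] [CompleteSpace H₂]
    (X : Submodule ℂ (H₁ →L[ℂ] H₂)) (hXclosed : IsClosed (X : Set (H₁ →L[ℂ] H₂)))
    (D₁ : Submodule ℂ (H₁ →L[ℂ] H₁)) (hD₁closed : IsClosed (D₁ : Set (H₁ →L[ℂ] H₁)))
    (hD₁mul : ∀ a ∈ D₁, ∀ b ∈ D₁, a ∘L b ∈ D₁)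
    (hD₁star : ∀ a ∈ D₁, adjoint a ∈ D₁)
    (D₂ : Submodule ℂ (H₂ →L[ℂ] H₂)) (hD₂closed : IsClosed (D₂ : Set (H₂ →L[ℂ] H₂)))
    (hD₂mul : ∀ a ∈ D₂, ∀ b ∈ D₂, a ∘L b ∈ D₂)
    (hD₂star : ∀ a ∈ D₂, adjoint a ∈ D₂)
    (hX₂ : (X : Set (H₁ →L[ℂ] H₂)) = csp {T | ∃ d ∈ D₂, ∃ x ∈ X, T = d ∘L x})
    (hX₁ : (X : Set (H₁ →L[ℂ] H₂)) = csp {T | ∃ x ∈ X, ∃ d ∈ D₁, T = x ∘L d})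
    (AX ΔAX : Set (WithLp 2 (H₂ × H₁) →L[ℂ] WithLp 2 (H₂ × H₁)))
    (hAX : AX = {T | ∃ d₂ ∈ D₂, ∃ x ∈ X, ∃ d₁ ∈ D₁, T = blockOp d₂ x d₁})
    (hΔAX : ΔAX = AX ∩ {T | ∃ S ∈ AX, T = adjoint S}) :
    AX = csp {T | ∃ a ∈ AX, ∃ c ∈ ΔAX, T = a ∘L c} ∧
    AX = csp {T | ∃ c ∈ ΔAX, ∃ a ∈ AX, T = c ∘L a} := by
  have hD₂X : ∀ d ∈ D₂, ∀ x ∈ X, d ∘L x ∈ X := fun d hd x hx =>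
    map_mem_of_coe_eq_csp hX₂ (postcomp H₁ d)
      (by rintro _ ⟨e, he, y, hy, rfl⟩; exact ⟨d ∘L e, hD₂mul d hd e he, y, hy, rfl⟩) hx
  have hXD₁ : ∀ x ∈ X, ∀ d ∈ D₁, x ∘L d ∈ X := fun x hx d hd =>
    map_mem_of_coe_eq_csp hX₁ (precomp H₂ d)
      (by rintro _ ⟨y, hy, e, he, rfl⟩; exact ⟨y, hy, e ∘L d, hD₁mul e he d hd, rfl⟩) hx
  let 𝒟₂ := (D₂.toNonUnitalSubalgebra fun a b ha hb => hD₂mul a ha b hb).toNonUnitalStarSubalgebra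
    hD₂star
  let 𝒟₁ := (D₁.toNonUnitalSubalgebra fun a b ha hb => hD₁mul a ha b hb).toNonUnitalStarSubalgebra
    hD₁star
  have : IsClosed (𝒟₂ : Set (H₂ →L[ℂ] H₂)) := hD₂closed
  have : IsClosed (𝒟₁ : Set (H₁ →L[ℂ] H₁)) := hD₁closed
  rw [← coe_blockAlgebra] at hAX
  subst hAX hΔAX
  have hclosed := isClosed_blockAlgebra hD₂closed hXclosed hD₁closed
  have hcomp := comp_mem_blockAlgebra hD₂mul hD₁mul hD₂X hXD₁
  have hdiag := blockOp_zero_mem_blockAlgebra_inter_adjoint (X := X) hD₂star hD₁star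
  refine ⟨(blockAlgebra_subset_csp_comp_diagonal (fun d hd => 𝒟₂.mem_closure_image_mul_left hd)
      (fun d hd => 𝒟₁.mem_closure_image_mul_left hd) hX₁.subset hdiag).antisymm
      (csp_subset hclosed ?_),
    (blockAlgebra_subset_csp_diagonal_comp (fun d hd => 𝒟₂.mem_closure_image_mul_right hd)
      (fun d hd => 𝒟₁.mem_closure_image_mul_right hd) hX₂.subset hdiag).antisymm
      (csp_subset hclosed ?_)⟩
  · rintro _ ⟨a, ha, c, hc, rfl⟩
    exact hcomp a ha c hc.1
  · rintro _ ⟨c, hc, a, ha, rfl⟩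
    exact hcomp c hc.1 a ha
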